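/- Let α, β be finite types, let p be a joint probability mass function on α × β describing jointly distributed random variables (X, Y), let g : α → γ and h : γ → δ be functions into finite types, and set S := g(X) and Z := h(S) (the joint pmf of (X, Y, S, Z) is the pushforward of p under (x, y) ↦ (x, y, g x, h (g x))). Then I(Z; X | Y) = I(Z; S | Y), and consequently I(Z; X | Y) ≤ I(X; S | Y). -/
import Mathlib


open scoped BigOperators

/-- Shannon entropy of a pmf on a finite type (natural logarithm, `0 * log 0 = 0`). -/
noncomputable def ent {σ : Type*} [Fintype σ] (q : σ → ℝ) : ℝ :=
  ∑ x, -(q x * Real.log (q x))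

/- `p` is the joint pmf of `(X, Y)` on `α × β`; with `g : α → γ`, `h : γ → δ`,
`S := g(X)` and `Z := h(S)`, the joint pmf of `(X, Y, S, Z)` on `α × β × γ × δ` is the
pushforward of `p` under `(x, y) ↦ (x, y, g x, h (g x))`. -/
variable {α β γ δ : Type*} [Fintype α] [Fintype β] [Fintype γ] [Fintype δ]
  [DecidableEq γ] [DecidableEq δ]

/-- The joint pmf of `(X, Y, S, Z)` with `S := g(X)` and `Z := h(S)`: the pushforward of
`p` under `(x, y) ↦ (x, y, g x, h (g x))`. -/
noncomputable def joint (p : α × β → ℝ) (g : α → γ) (h : γ → δ) : α × β × γ × δ → ℝ :=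
  fun w => if g w.1 = w.2.2.1 ∧ h (g w.1) = w.2.2.2 then p (w.1, w.2.1) else 0

/-- Marginal pmf of `Y`. -/
noncomputable def margY (q : α × β × γ × δ → ℝ) : β → ℝ :=
  fun y => ∑ x, ∑ s, ∑ z, q (x, y, s, z)
/-- Marginal pmf of `(Z, Y)`. -/
noncomputable def margZY (q : α × β × γ × δ → ℝ) : δ × β → ℝ :=
  fun w => ∑ x, ∑ s, q (x, w.2, s, w.1)
/-- Marginal pmf of `(X, Y)`. -/
noncomputable def margXY (q : α × β × γ × δ → ℝ) : α × β → ℝ :=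
  fun w => ∑ s, ∑ z, q (w.1, w.2, s, z)
/-- Marginal pmf of `(S, Y)`. -/
noncomputable def margSY (q : α × β × γ × δ → ℝ) : γ × β → ℝ :=
  fun w => ∑ x, ∑ z, q (x, w.2, w.1, z)
/-- Marginal pmf of `(X, Y, Z)`. -/
noncomputable def margXYZ (q : α × β × γ × δ → ℝ) : α × β × δ → ℝ :=
  fun w => ∑ s, q (w.1, w.2.1, s, w.2.2)
/-- Marginal pmf of `(S, Y, Z)`. -/
noncomputable def margSYZ (q : α × β × γ × δ → ℝ) : γ × β × δ → ℝ :=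
  fun w => ∑ x, q (x, w.2.1, w.1, w.2.2)
/-- Marginal pmf of `(X, Y, S)`. -/
noncomputable def margXYS (q : α × β × γ × δ → ℝ) : α × β × γ → ℝ :=
  fun w => ∑ z, q (w.1, w.2.1, w.2.2, z)

/-- `I(Z; X | Y) = H(Z,Y) + H(X,Y) - H(Y) - H(X,Y,Z)`. -/
noncomputable def cmiZ_X_Y (q : α × β × γ × δ → ℝ) : ℝ :=
  ent (margZY q) + ent (margXY q) - ent (margY q) - ent (margXYZ q)
/-- `I(Z; S | Y) = H(Z,Y) + H(S,Y) - H(Y) - H(S,Y,Z)`. -/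
noncomputable def cmiZ_S_Y (q : α × β × γ × δ → ℝ) : ℝ :=
  ent (margZY q) + ent (margSY q) - ent (margY q) - ent (margSYZ q)
/-- `I(X; S | Y) = H(X,Y) + H(S,Y) - H(Y) - H(X,Y,S)`. -/
noncomputable def cmiX_S_Y (q : α × β × γ × δ → ℝ) : ℝ :=
  ent (margXY q) + ent (margSY q) - ent (margY q) - ent (margXYS q)

-- helper lemmas
lemma sum_ite_F {τ : Type*} [Fintype τ] [DecidableEq τ] (c : τ) (a : ℝ) :
    ∑ z : τ, -((if c = z then a else 0) * Real.log (if c = z then a else 0))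
      = -(a * Real.log a) := by
  have key : ∀ z : τ, -((if c = z then a else 0) * Real.log (if c = z then a else 0))
      = if c = z then -(a * Real.log a) else 0 := by
    intro z; split <;> simp
  simp [key]

lemma sum_log_le {ι : Type*} (t : Finset ι) (a : ι → ℝ) (ha : ∀ i ∈ t, 0 ≤ a i) :
    ∑ i ∈ t, a i * Real.log (a i) ≤ (∑ i ∈ t, a i) * Real.log (∑ i ∈ t, a i) := by
  set A := ∑ i ∈ t, a i with hA
  calc ∑ i ∈ t, a i * Real.log (a i) ≤ ∑ i ∈ t, a i * Real.log A := by
        apply Finset.sum_le_sum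
        intro i hi
        rcases eq_or_lt_of_le (ha i hi) with h0 | h0
        · simp [← h0]
        · exact mul_le_mul_of_nonneg_left
            (Real.log_le_log h0 (Finset.single_le_sum ha hi)) (le_of_lt h0)
    _ = A * Real.log A := by rw [← Finset.sum_mul]

/-- Theorem 3 of the paper, finite-variable form: with `S := g(X)` and
`Z := h(S)`, the task-irrelevant information collapses:
`I(Z; X | Y) = I(Z; S | Y)`, and consequently `I(Z; X | Y) ≤ I(X; S | Y)`. -/
theorem task_irrelevant_information (p : α × β → ℝ)
    (hp0 : ∀ w, 0 ≤ p w) (hp1 : ∑ w, p w = 1) (g : α → γ) (h : γ → δ) :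
    cmiZ_X_Y (joint p g h) = cmiZ_S_Y (joint p g h) ∧
    cmiZ_X_Y (joint p g h) ≤ cmiX_S_Y (joint p g h) := by
  set q := joint p g h with hq
  have hXY : ∀ x y, margXY q (x, y) = p (x, y) := by
    intro x y
    simp [margXY, hq, joint, ite_and, Finset.sum_ite_eq]
  have hSY : ∀ s y, margSY q (s, y) = ∑ x, if g x = s then p (x, y) else 0 := by
    intro s y
    simp [margSY, hq, joint, ite_and, Finset.sum_ite_eq]
  have hXYZ : ∀ x y z, margXYZ q (x, y, z) = if h (g x) = z then p (x, y) else 0 := by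
    intro x y z
    simp [margXYZ, hq, joint, ite_and, Finset.sum_ite_eq]
  have hXYS : ∀ x y s, margXYS q (x, y, s) = if g x = s then p (x, y) else 0 := by
    intro x y s
    by_cases hs : g x = s <;> simp [margXYS, hq, joint, hs]
  have hSYZ : ∀ s y z, margSYZ q (s, y, z) = if h s = z then margSY q (s, y) else 0 := by
    intro s y z
    rw [hSY]
    simp only [margSYZ, hq, joint]
    rcases eq_or_ne (h s) z with hz | hz
    · subst hz
      rw [if_pos rfl]
      apply Finset.sum_congr rfl
      intro x _
      rcases eq_or_ne (g x) s with hx | hx <;> simp [hx]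
    · rw [if_neg hz]
      apply Finset.sum_eq_zero
      intro x _
      rcases eq_or_ne (g x) s with hx | hx <;> simp [hx, hz]
  have hZY : ∀ z y, margZY q (z, y) = ∑ s, if h s = z then margSY q (s, y) else 0 := by
    intro z y
    simp only [margZY]
    rw [Finset.sum_comm]
    apply Finset.sum_congr rfl
    intro s _
    rw [hSY]
    rcases eq_or_ne (h s) z with hz | hz
    · rw [if_pos hz]
      apply Finset.sum_congr rfl
      intro x _
      rcases eq_or_ne (g x) s with hx | hx <;> simp [hq, joint, hx, hz]
    · rw [if_neg hz]
      apply Finset.sum_eq_zero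
      intro x _
      rcases eq_or_ne (g x) s with hx | hx <;> simp [hq, joint, hx, hz]
  have eXYZ : ent (margXYZ q) = ent (margXY q) := by
    simp only [ent, Fintype.sum_prod_type]
    apply Finset.sum_congr rfl; intro x _
    apply Finset.sum_congr rfl; intro y _
    rw [← sum_ite_F (h (g x)) (margXY q (x, y))]
    apply Finset.sum_congr rfl; intro z _
    rw [hXYZ, hXY]
  have eXYS : ent (margXYS q) = ent (margXY q) := by
    simp only [ent, Fintype.sum_prod_type]
    apply Finset.sum_congr rfl; intro x _
    apply Finset.sum_congr rfl; intro y _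
    rw [← sum_ite_F (g x) (margXY q (x, y))]
    apply Finset.sum_congr rfl; intro s _
    rw [hXYS, hXY]
  have eSYZ : ent (margSYZ q) = ent (margSY q) := by
    simp only [ent, Fintype.sum_prod_type]
    apply Finset.sum_congr rfl; intro s _
    apply Finset.sum_congr rfl; intro y _
    rw [← sum_ite_F (h s) (margSY q (s, y))]
    apply Finset.sum_congr rfl; intro z _
    rw [hSYZ]
  have hSY0 : ∀ s y, 0 ≤ margSY q (s, y) := by
    intro s y
    rw [hSY]
    apply Finset.sum_nonneg
    intro x _
    split
    · exact hp0 _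
    · exact le_rfl
  have eZY_le : ent (margZY q) ≤ ent (margSY q) := by
    simp only [ent, Fintype.sum_prod_type]
    rw [← Finset.sum_fiberwise Finset.univ h
      (fun s => ∑ y, -(margSY q (s, y) * Real.log (margSY q (s, y))))]
    apply Finset.sum_le_sum
    intro z _
    rw [Finset.sum_comm]
    apply Finset.sum_le_sum
    intro y _
    have ha : ∀ s ∈ Finset.univ.filter (fun s => h s = z), 0 ≤ margSY q (s, y) :=
      fun s _ => hSY0 s y
    have key := sum_log_le (Finset.univ.filter (fun s => h s = z))
      (fun s => margSY q (s, y)) ha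
    have hm : margZY q (z, y)
        = ∑ s ∈ Finset.univ.filter (fun s => h s = z), margSY q (s, y) := by
      rw [hZY, Finset.sum_filter]
    rw [hm]
    simpa using neg_le_neg key
  constructor
  · simp only [cmiZ_X_Y, cmiZ_S_Y, eXYZ, eSYZ]; ring
  · simp only [cmiZ_X_Y, cmiX_S_Y, eXYZ, eXYS]
    linarith
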